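/- In the setting of Theorem on the choice of boundary circle: let f₁ ∈ 𝒟_1(2α, β/2) be a minimizer of the energy ∫ Df·B̃ Df r dr dθ, and define J = { r ∈ [2α, β/2] : ∫₀^{2π} Df₁(r,θ)·B̃(r,θ)Df₁(r,θ) dθ ≤ (1/r²)∫₀^{2π} B̃_{θθ}(r,θ) dθ }. Then J is nonempty. -/

import Mathlib

open MeasureTheory Real Set Matrix

/-- The polar gradient Df = (∂_r f, (1/r) ∂_θ f) of a function of (r,θ). -/
noncomputable def Dpol (f : ℝ × ℝ → ℝ) (p : ℝ × ℝ) : Fin 2 → ℝ :=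
  ![fderiv ℝ f p (1, 0), (1 / p.1) * fderiv ℝ f p (0, 1)]

/-- The rectangle [α,β]×[0,2π] in the (r,θ) variables. -/
def rect (α β : ℝ) : Set (ℝ × ℝ) := Icc α β ×ˢ Icc 0 (2*π)

/-- The quadratic energy Q(f) = ∫ Df·B̃ Df r dr dθ on the rectangle. -/
noncomputable def Qen (Bt : ℝ × ℝ → Matrix (Fin 2) (Fin 2) ℝ) (α β : ℝ)
    (f : ℝ × ℝ → ℝ) : ℝ :=
  ∫ p in rect α β, (Dpol f p ⬝ᵥ (Bt p) *ᵥ Dpol f p) * p.1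

/-- The class 𝒟_κ(α,β) of H¹ liftings of degree κ. -/
noncomputable def Dkappa (α β : ℝ) (κ : ℤ) : Set (ℝ × ℝ → ℝ) :=
  {f | DifferentiableOn ℝ f (rect α β) ∧
    IntegrableOn (fun p => (∑ i, Dpol f p i ^ 2) * p.1) (rect α β) ∧
    ∀ᵐ r ∂(volume.restrict (Icc α β)), f (r, 2*π) = f (r, 0) + 2*κ*π}

theorem stmt13 (α β : ℝ) (hα : 0 < α) (hαβ : 4*α < β)
    (m M : ℝ) (hm : 0 < m) (hmM : m ≤ M)
    (Bt : ℝ × ℝ → Matrix (Fin 2) (Fin 2) ℝ)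
    (hBmeas : ∀ i j, Measurable fun p => Bt p i j)
    (hBsymm : ∀ p, (Bt p).IsSymm)
    (hBspec : ∀ p (ξ : Fin 2 → ℝ),
      m * ∑ i, ξ i ^ 2 ≤ ξ ⬝ᵥ (Bt p) *ᵥ ξ ∧ ξ ⬝ᵥ (Bt p) *ᵥ ξ ≤ M * ∑ i, ξ i ^ 2)
    (f₁ : ℝ × ℝ → ℝ) (hf₁ : f₁ ∈ Dkappa (2*α) (β/2) 1)
    (hmin : ∀ g ∈ Dkappa (2*α) (β/2) 1, Qen Bt (2*α) (β/2) f₁ ≤ Qen Bt (2*α) (β/2) g) :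
    {r ∈ Icc (2*α) (β/2) |
      (∫ θ in (0:ℝ)..(2*π), Dpol f₁ (r, θ) ⬝ᵥ (Bt (r, θ)) *ᵥ Dpol f₁ (r, θ)) ≤
        (1/r^2) * ∫ θ in (0:ℝ)..(2*π), Bt (r, θ) 1 1}.Nonempty := by
  by_contra hJ
  rw [Set.not_nonempty_iff_eq_empty, Set.eq_empty_iff_forall_notMem] at hJ
  have h2π : (0:ℝ) ≤ 2*π := by positivity
  have hab : 2*α ≤ β/2 := by linarith
  have hMpos : 0 < M := lt_of_lt_of_le hm hmM
  -- strict inequality from emptiness of J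
  have key : ∀ r ∈ Icc (2*α) (β/2),
      (1/r^2) * (∫ θ in (0:ℝ)..(2*π), Bt (r, θ) 1 1) <
      ∫ θ in (0:ℝ)..(2*π), Dpol f₁ (r, θ) ⬝ᵥ (Bt (r, θ)) *ᵥ Dpol f₁ (r, θ) := by
    intro r hr
    by_contra hc
    push_neg at hc
    exact hJ r ⟨hr, hc⟩
  -- the comparison function g(r,θ) = θ
  set g : ℝ × ℝ → ℝ := fun p => p.2 with hgdef
  have hDg : ∀ p : ℝ × ℝ, Dpol g p = ![0, 1/p.1] := by
    intro p
    simp [Dpol, hgdef, fderiv_snd]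
  -- integrands
  set Qf : ℝ × ℝ → ℝ := fun p => (Dpol f₁ p ⬝ᵥ (Bt p) *ᵥ Dpol f₁ p) * p.1 with hQfdef
  set Qg : ℝ × ℝ → ℝ := fun p => (Dpol g p ⬝ᵥ (Bt p) *ᵥ Dpol g p) * p.1 with hQgdef
  have hQgeq : ∀ p : ℝ × ℝ, Qg p = (1/p.1 * (Bt p 1 1 * (1/p.1))) * p.1 := by
    intro p
    simp [hQgdef, hDg p, dotProduct, mulVec, Fin.sum_univ_two]
  -- measurability
  have hd0 : Measurable fun p : ℝ × ℝ => fderiv ℝ f₁ p (1, 0) :=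
    measurable_fderiv_apply_const ℝ f₁ _
  have hd1 : Measurable fun p : ℝ × ℝ => (1/p.1) * fderiv ℝ f₁ p (0, 1) :=
    (measurable_const.div measurable_fst).mul (measurable_fderiv_apply_const ℝ f₁ _)
  have hQfmeas : Measurable Qf := by
    have : Qf = fun p => ((fderiv ℝ f₁ p (1, 0)) * (Bt p 0 0 * (fderiv ℝ f₁ p (1, 0)) +
        Bt p 0 1 * ((1/p.1) * fderiv ℝ f₁ p (0, 1))) +
        ((1/p.1) * fderiv ℝ f₁ p (0, 1)) * (Bt p 1 0 * (fderiv ℝ f₁ p (1, 0)) +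
        Bt p 1 1 * ((1/p.1) * fderiv ℝ f₁ p (0, 1)))) * p.1 := by
      funext p
      simp [hQfdef, Dpol, dotProduct, mulVec, Fin.sum_univ_two]
    rw [this]
    exact ((hd0.mul (((hBmeas 0 0).mul hd0).add ((hBmeas 0 1).mul hd1))).add
      (hd1.mul (((hBmeas 1 0).mul hd0).add ((hBmeas 1 1).mul hd1)))).mul measurable_fst
  have hQgmeas : Measurable Qg := by
    have : Qg = fun p => (1/p.1 * (Bt p 1 1 * (1/p.1))) * p.1 := funext hQgeq
    rw [this]
    exact (((measurable_const.div measurable_fst).mul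
      ((hBmeas 1 1).mul (measurable_const.div measurable_fst))).mul measurable_fst)
  have hrectmeas : MeasurableSet (rect (2*α) (β/2)) :=
    measurableSet_Icc.prod measurableSet_Icc
  have hrectfin : volume (rect (2*α) (β/2)) ≠ ⊤ :=
    (isCompact_Icc.prod isCompact_Icc).measure_lt_top.ne
  have hmem : ∀ᵐ p ∂(volume.restrict (rect (2*α) (β/2))), p ∈ rect (2*α) (β/2) :=
    ae_restrict_mem hrectmeas
  -- integrability of Qf on rect
  have hQfint : IntegrableOn Qf (rect (2*α) (β/2)) := by
    refine Integrable.mono' ((hf₁.2.1).const_mul M) hQfmeas.aestronglyMeasurable ?_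
    filter_upwards [hmem] with p hp
    have hp1 : 0 < p.1 := lt_of_lt_of_le (by linarith) hp.1.1
    have h1 := (hBspec p (Dpol f₁ p)).1
    have h2 := (hBspec p (Dpol f₁ p)).2
    have hsq : (0:ℝ) ≤ ∑ i, Dpol f₁ p i ^ 2 := by positivity
    have hQnn : 0 ≤ Qf p := mul_nonneg (le_trans (by positivity) h1) hp1.le
    rw [Real.norm_eq_abs, abs_of_nonneg hQnn]
    exact mul_le_mul_of_nonneg_right h2 hp1.le |>.trans_eq (by ring)
  -- integrability of Qg on rect
  have hQgint : IntegrableOn Qg (rect (2*α) (β/2)) := by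
    refine Measure.integrableOn_of_bounded hrectfin hQgmeas.aestronglyMeasurable
      (M := M / (2*α)) ?_
    filter_upwards [hmem] with p hp
    have hp1 : 0 < p.1 := lt_of_lt_of_le (by linarith) hp.1.1
    have h1 := (hBspec p (Dpol g p)).1
    have h2 := (hBspec p (Dpol g p)).2
    have hsum : ∑ i, Dpol g p i ^ 2 = (1/p.1)^2 := by
      simp [hDg p, Fin.sum_univ_two]
    have hQnn : 0 ≤ Qg p := mul_nonneg (le_trans (by positivity) h1) hp1.le
    rw [Real.norm_eq_abs, abs_of_nonneg hQnn]
    have : Qg p ≤ M * (1/p.1)^2 * p.1 := by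
      rw [← hsum]
      exact (mul_le_mul_of_nonneg_right h2 hp1.le).trans_eq (by ring)
    refine this.trans ?_
    have : M * (1/p.1)^2 * p.1 = M / p.1 := by field_simp
    rw [this]
    exact div_le_div_of_nonneg_left hMpos.le (by linarith) hp.1.1
  -- g belongs to the class
  have hg : g ∈ Dkappa (2*α) (β/2) 1 := by
    refine ⟨differentiable_snd.differentiableOn, ?_, ?_⟩
    · refine Measure.integrableOn_of_bounded hrectfin ?_ (M := 1/(2*α)) ?_
      · refine Measurable.aestronglyMeasurable ?_
        have : (fun p : ℝ × ℝ => (∑ i, Dpol g p i ^ 2) * p.1) =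
            fun p => ((0:ℝ)^2 + (1/p.1)^2) * p.1 := by
          funext p; simp [hDg p, Fin.sum_univ_two]
        rw [this]
        exact (measurable_const.add ((measurable_const.div measurable_fst).pow
          measurable_const)).mul measurable_fst
      · filter_upwards [hmem] with p hp
        have hp1 : 0 < p.1 := lt_of_lt_of_le (by linarith) hp.1.1
        have : (∑ i, Dpol g p i ^ 2) * p.1 = 1/p.1 := by
          rw [show ∑ i, Dpol g p i ^ 2 = (1/p.1)^2 by simp [hDg p, Fin.sum_univ_two]]
          field_simp
        rw [this, Real.norm_eq_abs, abs_of_nonneg (by positivity)]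
        exact div_le_div_of_nonneg_left one_pos.le (by linarith) hp.1.1
    · refine Filter.Eventually.of_forall fun r => ?_
      simp [hgdef]
  -- Fubini
  have hvol : (volume : Measure (ℝ × ℝ)) = (volume : Measure ℝ).prod volume :=
    Measure.volume_eq_prod _ _
  have hQf' : Integrable Qf (((volume : Measure ℝ).restrict (Icc (2*α) (β/2))).prod
      ((volume : Measure ℝ).restrict (Icc 0 (2*π)))) := by
    rw [Measure.prod_restrict]
    exact hvol ▸ hQfint
  have hQg' : Integrable Qg (((volume : Measure ℝ).restrict (Icc (2*α) (β/2))).prod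
      ((volume : Measure ℝ).restrict (Icc 0 (2*π)))) := by
    rw [Measure.prod_restrict]
    exact hvol ▸ hQgint
  have hFub1 : Qen Bt (2*α) (β/2) f₁ =
      ∫ r in Icc (2*α) (β/2), ∫ θ in Icc 0 (2*π), Qf (r, θ) := by
    rw [Qen, rect, ← hQfdef, hvol]
    exact setIntegral_prod Qf (hvol ▸ hQfint)
  have hFub2 : Qen Bt (2*α) (β/2) g =
      ∫ r in Icc (2*α) (β/2), ∫ θ in Icc 0 (2*π), Qg (r, θ) := by
    rw [Qen, rect, ← hQgdef, hvol]
    exact setIntegral_prod Qg (hvol ▸ hQgint)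
  have hFint : Integrable (fun r => ∫ θ in Icc 0 (2*π), Qf (r, θ))
      ((volume : Measure ℝ).restrict (Icc (2*α) (β/2))) :=
    hQf'.integral_prod_left
  have hGint : Integrable (fun r => ∫ θ in Icc 0 (2*π), Qg (r, θ))
      ((volume : Measure ℝ).restrict (Icc (2*α) (β/2))) :=
    hQg'.integral_prod_left
  -- compute the fibers
  have hfibF : ∀ r : ℝ, ∫ θ in Icc 0 (2*π), Qf (r, θ) =
      r * ∫ θ in (0:ℝ)..(2*π), Dpol f₁ (r, θ) ⬝ᵥ (Bt (r, θ)) *ᵥ Dpol f₁ (r, θ) := by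
    intro r
    rw [intervalIntegral.integral_of_le h2π, ← integral_Icc_eq_integral_Ioc,
      ← MeasureTheory.integral_const_mul]
    apply integral_congr_ae
    refine Filter.Eventually.of_forall fun θ => ?_
    simp [hQfdef, mul_comm]
  have hfibG : ∀ r ∈ Icc (2*α) (β/2), ∫ θ in Icc 0 (2*π), Qg (r, θ) =
      r * ((1/r^2) * ∫ θ in (0:ℝ)..(2*π), Bt (r, θ) 1 1) := by
    intro r hr
    have hr0 : (0:ℝ) < r := lt_of_lt_of_le (by linarith) hr.1
    rw [intervalIntegral.integral_of_le h2π, ← integral_Icc_eq_integral_Ioc,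
      ← MeasureTheory.integral_const_mul, ← MeasureTheory.integral_const_mul]
    apply integral_congr_ae
    refine Filter.Eventually.of_forall fun θ => ?_
    show Qg (r, θ) = r * (1 / r ^ 2 * Bt (r, θ) 1 1)
    rw [hQgeq (r, θ)]
    field_simp
  -- strict pointwise inequality of fibers
  have hDpos : ∀ r ∈ Icc (2*α) (β/2),
      0 < (∫ θ in Icc 0 (2*π), Qf (r, θ)) - ∫ θ in Icc 0 (2*π), Qg (r, θ) := by
    intro r hr
    have hr0 : (0:ℝ) < r := lt_of_lt_of_le (by linarith) hr.1
    rw [hfibF r, hfibG r hr, ← mul_sub]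
    exact mul_pos hr0 (sub_pos.mpr (key r hr))
  -- conclude
  have hle : Qen Bt (2*α) (β/2) f₁ ≤ Qen Bt (2*α) (β/2) g := hmin g hg
  have hsub : ∫ r in Icc (2*α) (β/2),
      ((∫ θ in Icc 0 (2*π), Qf (r, θ)) - ∫ θ in Icc 0 (2*π), Qg (r, θ)) =
      Qen Bt (2*α) (β/2) f₁ - Qen Bt (2*α) (β/2) g := by
    rw [integral_sub hFint hGint, hFub1, hFub2]
  have hpos : 0 < ∫ r in Icc (2*α) (β/2),
      ((∫ θ in Icc 0 (2*π), Qf (r, θ)) - ∫ θ in Icc 0 (2*π), Qg (r, θ)) := by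
    rw [setIntegral_pos_iff_support_of_nonneg_ae
      ((ae_restrict_mem measurableSet_Icc).mono fun r hr => (hDpos r hr).le)
      (hFint.sub hGint)]
    refine lt_of_lt_of_le ?_ (measure_mono (fun r hr => ⟨ne_of_gt (hDpos r hr), hr⟩))
    rw [Real.volume_Icc]
    exact ENNReal.ofReal_pos.mpr (by linarith)
  linarith [hsub ▸ hpos]
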